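/- Let q be a prime power and let a ≤ q - 2. The evaluation map from the space of polynomials f ∈ F_q[x,y] of total degree at most a to F_q^{(q-1)²} sending f to (f(t))_{t ∈ (F_q^×)²} is injective. -/

import Mathlib

/-!
A polynomial of total degree at most `q - 2` has degree less than `q - 1 = #Fˣ` in each
variable, so by the combinatorial Nullstellensatz it cannot vanish on the grid `Fˣ × Fˣ`
unless it is zero; apply this to the difference of two polynomials with equal evaluations.
-/

open MvPolynomial

/-- Evaluation of a polynomial in two variables at all points of the torus
`(F^×)²`, as a linear map. -/
noncomputable def evalTorus (F : Type) [Field F] :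
    MvPolynomial (Fin 2) F →ₗ[F] ((Fˣ × Fˣ) → F) :=
  LinearMap.pi fun t => (aeval ![((t.1 : F)), ((t.2 : F))]).toLinearMap

theorem evalTorus_apply (F : Type) [Field F] (p : MvPolynomial (Fin 2) F) (t : Fˣ × Fˣ) :
    evalTorus F p t = eval ![(t.1 : F), (t.2 : F)] p :=
  rfl

theorem MvPolynomial.eq_zero_of_eval_units_eq_zero {σ F : Type*} [Finite σ] [Field F]
    [Fintype F] (P : MvPolynomial σ F) (hdeg : ∀ i, P.degreeOf i < Fintype.card F - 1)
    (heval : ∀ x : σ → F, (∀ i, x i ≠ 0) → eval x P = 0) : P = 0 := by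
  classical
  refine eq_zero_of_eval_zero_at_prod_finset P (fun _ => Finset.univ.erase 0) ?_ ?_
  · simpa [Finset.card_erase_of_mem] using hdeg
  · simpa using heval

/-- The evaluation map on the torus is injective on polynomials of
total degree at most `a ≤ q - 2`. -/
theorem eval_injective_total_degree (F : Type) [Field F] [Fintype F]
    (a : ℕ) (haq : a ≤ Fintype.card F - 2) :
    Set.InjOn (evalTorus F)
      ((restrictTotalDegree (Fin 2) F a : Submodule F (MvPolynomial (Fin 2) F)) :
        Set (MvPolynomial (Fin 2) F)) := by
  intro p hp q hq hpq
  have hcard : 2 ≤ Fintype.card F := Fintype.one_lt_card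
  have hdeg : (p - q).totalDegree ≤ a :=
    (mem_restrictTotalDegree _ _ _).mp (Submodule.sub_mem _ hp hq)
  refine sub_eq_zero.mp (eq_zero_of_eval_units_eq_zero (p - q) (fun i => ?_) fun x hx => ?_)
  · have := degreeOf_le_totalDegree (p - q) i
    omega
  · have h := congrFun hpq (Units.mk0 (x 0) (hx 0), Units.mk0 (x 1) (hx 1))
    rw [evalTorus_apply, evalTorus_apply] at h
    have hvec : ![x 0, x 1] = x := by ext i; fin_cases i <;> rfl
    simpa [hvec, sub_eq_zero] using h
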